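/- arXiv:2210.06850 — 6 statements merged into one kernel-verified Lean document; each statement's English description precedes it below -/
import Mathlib

section
/- Let m, c ∈ ℝ and s > 0 satisfy |m − c| ≤ s. Then the Gaussian measure gaussianReal m s² assigns to the set {y ∈ ℝ : y > c} probability at least 1/(4e√π). (Core of Lemma 3: a Gaussian sample whose mean lies within one standard deviation of a target value exceeds the target with probability at least p = 1/(4e√π).) -/
/-!
On the interval `(c, c + s)`, which has length `s`, every point lies within `2s` of the mean,
so the density of `gaussianReal m s²` is at least `e⁻² / (s √(2π))` there. The interval thus
carries mass at least `e⁻² / √(2π)`, which exceeds `1 / (4e√π)` because `e √2 ≤ 4`.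
-/

open MeasureTheory ProbabilityTheory Real Set
open scoped NNReal

namespace ProbabilityTheory

lemma gaussianPDFReal_ge_of_sq_sub_le {μ : ℝ} {v : ℝ≥0} (hv : v ≠ 0) {x a : ℝ}
    (hx : (x - μ) ^ 2 ≤ a * v) :
    (√(2 * π * v))⁻¹ * rexp (-a / 2) ≤ gaussianPDFReal μ v x := by
  have hv_pos : (0 : ℝ) < v := by positivity
  refine mul_le_mul_of_nonneg_left (exp_le_exp.mpr ?_) (by positivity)
  rw [neg_div, neg_div, neg_le_neg_iff, div_le_div_iff₀ (by positivity) two_pos]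
  nlinarith

lemma ofReal_mul_volume_le_gaussianReal {μ : ℝ} {v : ℝ≥0} (hv : v ≠ 0) {S : Set ℝ} {r : ℝ}
    (hr : ∀ x ∈ S, r ≤ gaussianPDFReal μ v x) :
    ENNReal.ofReal r * volume S ≤ gaussianReal μ v S := by
  rw [gaussianReal_apply _ hv, ← setLIntegral_const]
  exact setLIntegral_mono (measurable_gaussianPDF _ _) fun x hx ↦ ENNReal.ofReal_le_ofReal (hr x hx)

end ProbabilityTheory

lemma Real.exp_one_mul_sqrt_two_le_four : rexp 1 * √2 ≤ 4 := by
  have hsqrt_two : √2 < 1.4142135624 := by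
    rw [sqrt_lt' (by norm_num)]
    norm_num
  nlinarith [exp_one_lt_d9, exp_pos 1, sqrt_nonneg 2]

lemma one_div_four_mul_exp_one_mul_sqrt_pi_le :
    1 / (4 * rexp 1 * √π) ≤ rexp (-2) / √(2 * π) := by
  have hexp : rexp (-2) * rexp 1 * rexp 1 = 1 := by
    rw [← exp_add, ← exp_add]
    norm_num
  rw [sqrt_mul zero_le_two, div_le_div_iff₀ (by positivity) (by positivity), one_mul]
  calc √2 * √π = rexp (-2) * (rexp 1 * (rexp 1 * √2)) * √π := by
        linear_combination (-(√2 * √π)) * hexp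
    _ ≤ rexp (-2) * (rexp 1 * 4) * √π := by gcongr; exact exp_one_mul_sqrt_two_le_four
    _ = rexp (-2) * (4 * rexp 1 * √π) := by ring

/-- Core of Lemma 3: if the mean `m` of a Gaussian with standard deviation `s > 0`
lies within one standard deviation of a target value `c`, then a sample from this
Gaussian exceeds `c` with probability at least `p = 1/(4e√π)`. -/
theorem gaussian_exceeds_target_prob
    (m c s : ℝ) (hs : 0 < s) (h : |m - c| ≤ s) :
    ENNReal.ofReal (1 / (4 * Real.exp 1 * Real.sqrt π)) ≤
      gaussianReal m ⟨s ^ 2, sq_nonneg s⟩ {y : ℝ | y > c} := by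
  have hv : (⟨s ^ 2, sq_nonneg s⟩ : ℝ≥0) ≠ 0 := NNReal.coe_ne_zero.mp (pow_pos hs 2).ne'
  have hdensity : ∀ x ∈ Ioo c (c + s), (√(2 * π * s ^ 2))⁻¹ * rexp (-4 / 2) ≤
      gaussianPDFReal m ⟨s ^ 2, sq_nonneg s⟩ x := by
    intro x ⟨hcx, hxs⟩
    obtain ⟨hmc, hcm⟩ := abs_le.mp h
    refine gaussianPDFReal_ge_of_sq_sub_le hv ?_
    calc (x - m) ^ 2 ≤ (2 * s) ^ 2 := sq_le_sq' (by linarith) (by linarith)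
      _ = 4 * s ^ 2 := by ring
  have hmass : ENNReal.ofReal (1 / (4 * rexp 1 * √π)) ≤
      ENNReal.ofReal ((√(2 * π * s ^ 2))⁻¹ * rexp (-4 / 2)) * volume (Ioo c (c + s)) := by
    rw [volume_Ioo, add_sub_cancel_left, ← ENNReal.ofReal_mul (by positivity)]
    refine ENNReal.ofReal_le_ofReal (one_div_four_mul_exp_one_mul_sqrt_pi_le.trans_eq ?_)
    rw [sqrt_mul' _ (sq_nonneg s), sqrt_sq hs.le]
    field_simp
    norm_num
  calc _ ≤ _ := hmass
    _ ≤ gaussianReal m ⟨s ^ 2, sq_nonneg s⟩ (Ioo c (c + s)) :=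
      ofReal_mul_volume_le_gaussianReal hv hdensity
    _ ≤ _ := measure_mono fun x hx ↦ hx.1
end

section
/- Let X be a nonempty finite set, t a positive integer, and (Ω, ℙ) a probability space. For each x ∈ X let Z_x : Ω → ℝ be a random variable whose law is gaussianReal (μ x) ((v x)²), where μ : X → ℝ and v : X → ℝ with v x ≥ 0. Then ℙ( for every x ∈ X, |Z_x − μ x| ≤ √(2·log(|X|·t²)) · v x ) ≥ 1 − 1/t². (The mathematical core of Lemmas 2 and 12: a sampled acquisition function with Gaussian marginals of means μ and standard deviations v concentrates simultaneously at all points of the finite domain, with failure probability at most 1/t²; no independence across x is required.) -/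
/-!
For a standard Gaussian `Y` and `β ≥ 0`, translating the density on `(β, ∞)` back to `(0, ∞)` and
using `(x + β)² ≥ x² + β²` for `x ≥ 0` gives `P(Y > β) ≤ e^{-β²/2} P(Y > 0)`; by symmetry
`P(|Y| > β) ≤ e^{-β²/2} P(Y ≠ 0) ≤ e^{-β²/2}`. With `β = √(2 log (|X| t²))` each `Z x` leaves its
band with probability at most `1 / (|X| t²)`, and a union bound over `X` gives the failure
probability `1 / t²`.
-/

open MeasureTheory ProbabilityTheory Real Set
open scoped ENNReal NNReal

namespace ProbabilityTheory

lemma gaussianPDFReal_add_le {x β : ℝ} (hx : 0 ≤ x) (hβ : 0 ≤ β) :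
    gaussianPDFReal 0 1 (x + β) ≤ exp (-β ^ 2 / 2) * gaussianPDFReal 0 1 x := by
  simp only [gaussianPDFReal, sub_zero, NNReal.coe_one, mul_one]
  rw [mul_left_comm, ← exp_add]
  gcongr
  nlinarith [mul_nonneg hx hβ]

lemma gaussianReal_Ioi_le_mul {β : ℝ} (hβ : 0 ≤ β) :
    gaussianReal 0 1 (Ioi β) ≤ ENNReal.ofReal (exp (-β ^ 2 / 2)) * gaussianReal 0 1 (Ioi 0) := by
  have hshift : ∫⁻ y in Ioi β, gaussianPDF 0 1 y = ∫⁻ x in Ioi 0, gaussianPDF 0 1 (x + β) := by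
    rw [← (measurePreserving_add_right volume β).setLIntegral_comp_preimage_emb
      (measurableEmbedding_addRight β), preimage_add_const_Ioi, sub_self]
  rw [gaussianReal_apply _ one_ne_zero, gaussianReal_apply _ one_ne_zero, hshift,
    ← lintegral_const_mul' _ _ ENNReal.ofReal_ne_top]
  refine setLIntegral_mono' measurableSet_Ioi fun x hx ↦ ?_
  rw [gaussianPDF, gaussianPDF, ← ENNReal.ofReal_mul (exp_nonneg _)]
  exact ENNReal.ofReal_le_ofReal (gaussianPDFReal_add_le (le_of_lt hx) hβ)

lemma gaussianReal_Iio_neg (v : ℝ≥0) (a : ℝ) :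
    gaussianReal 0 v (Iio (-a)) = gaussianReal 0 v (Ioi a) := by
  have hsymm := gaussianReal_map_neg (μ := 0) (v := v)
  rw [neg_zero] at hsymm
  nth_rw 1 [← hsymm]
  rw [Measure.map_apply measurable_neg measurableSet_Iio]
  simp

lemma gaussianReal_abs_gt_le {β : ℝ} (hβ : 0 ≤ β) :
    gaussianReal 0 1 {y | β < |y|} ≤ ENNReal.ofReal (exp (-β ^ 2 / 2)) := by
  have hsplit : {y : ℝ | β < |y|} = Iio (-β) ∪ Ioi β := by
    ext y; simp [lt_abs, lt_neg, or_comm]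
  have hhalves : gaussianReal 0 1 (Iio 0) = gaussianReal 0 1 (Ioi 0) := by
    simpa using gaussianReal_Iio_neg 1 0
  calc gaussianReal 0 1 {y | β < |y|}
      ≤ gaussianReal 0 1 (Iio (-β)) + gaussianReal 0 1 (Ioi β) := hsplit ▸ measure_union_le _ _
    _ = gaussianReal 0 1 (Ioi β) + gaussianReal 0 1 (Ioi β) := by rw [gaussianReal_Iio_neg]
    _ ≤ ENNReal.ofReal (exp (-β ^ 2 / 2)) * gaussianReal 0 1 (Iio 0) +
          ENNReal.ofReal (exp (-β ^ 2 / 2)) * gaussianReal 0 1 (Ioi 0) := by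
        rw [hhalves]
        exact add_le_add (gaussianReal_Ioi_le_mul hβ) (gaussianReal_Ioi_le_mul hβ)
    _ = ENNReal.ofReal (exp (-β ^ 2 / 2)) * gaussianReal 0 1 (Iio 0 ∪ Ioi 0) := by
        rw [measure_union Iio_disjoint_Ioi_same measurableSet_Ioi, mul_add]
    _ ≤ ENNReal.ofReal (exp (-β ^ 2 / 2)) := mul_le_of_le_one_right' prob_le_one

lemma gaussianReal_abs_sub_gt_le (m : ℝ) {σ β : ℝ} (hσ : 0 ≤ σ) (hβ : 0 ≤ β) :
    gaussianReal m ⟨σ ^ 2, sq_nonneg σ⟩ {y | β * σ < |y - m|} ≤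
      ENNReal.ofReal (exp (-β ^ 2 / 2)) := by
  have hmap :
      (gaussianReal 0 1).map (fun y ↦ σ * y + m) = gaussianReal m ⟨σ ^ 2, sq_nonneg σ⟩ := by
    rw [show (fun y ↦ σ * y + m) = (· + m) ∘ (σ * ·) from rfl,
      ← Measure.map_map (measurable_add_const m) (measurable_const_mul σ),
      gaussianReal_map_const_mul, gaussianReal_map_add_const, mul_zero, zero_add, mul_one]
    rfl
  rw [← hmap, Measure.map_apply (by fun_prop)
    (measurableSet_lt measurable_const (by fun_prop))]
  refine (measure_mono fun y hy ↦ ?_).trans (gaussianReal_abs_gt_le hβ)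
  simp only [mem_preimage, mem_ofPred_eq, add_sub_cancel_right, abs_mul, abs_of_nonneg hσ] at hy ⊢
  exact lt_of_mul_lt_mul_left (by linarith) hσ

end ProbabilityTheory

lemma MeasureTheory.one_sub_sum_measure_not_le_measure_forall {ι Ω : Type*} [Fintype ι]
    [MeasurableSpace Ω] (P : Measure Ω) [IsProbabilityMeasure P] (p : ι → Ω → Prop) :
    1 - ∑ i, P {ω | ¬ p i ω} ≤ P {ω | ∀ i, p i ω} := by
  rw [tsub_le_iff_right, ← measure_univ (μ := P)]
  refine (measure_univ_le_add_compl _).trans (add_le_add le_rfl ?_)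
  refine (measure_mono fun ω hω ↦ ?_).trans (measure_iUnion_fintype_le P _)
  simpa [not_forall] using hω

lemma Real.exp_neg_sqrt_two_mul_log_sq_div_two {x : ℝ} (hx : 1 ≤ x) :
    exp (-√(2 * log x) ^ 2 / 2) = x⁻¹ := by
  rw [sq_sqrt (by linarith [log_nonneg hx]), show -(2 * log x) / 2 = -log x by ring, exp_neg,
    exp_log (by linarith)]

theorem gaussian_simultaneous_concentration_general
    {X : Type*} [Fintype X] (t : ℕ) (ht : 0 < t)
    {Ω : Type*} [MeasureSpace Ω] [IsProbabilityMeasure (ℙ : Measure Ω)]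
    (Z : X → Ω → ℝ) (μ : X → ℝ) (v : X → ℝ) (hv : ∀ x, 0 ≤ v x)
    (hZ : ∀ x : X, Measure.map (Z x) ℙ = gaussianReal (μ x) ⟨(v x) ^ 2, sq_nonneg _⟩) :
    1 - ENNReal.ofReal (1 / (t : ℝ) ^ 2) ≤
      ℙ {ω : Ω | ∀ x : X,
          |Z x ω - μ x| ≤ Real.sqrt (2 * Real.log ((Fintype.card X : ℝ) * (t : ℝ) ^ 2)) * v x} := by
  set N := Fintype.card X
  set β := √(2 * log ((N : ℝ) * (t : ℝ) ^ 2))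
  have hZlaw (x : X) : HasLaw (Z x) (gaussianReal (μ x) ⟨v x ^ 2, sq_nonneg _⟩) ℙ :=
    -- `⟨v x ^ 2, _⟩` elaborates as a bare subtype, so instance search does not see an `ℝ≥0`
    ⟨aemeasurable_of_map_neZero
      (by rw [hZ x]; exact ⟨(instIsProbabilityMeasureGaussianReal _ _).ne_zero⟩), hZ x⟩
  have hfail (x : X) :
      ℙ {ω | ¬ |Z x ω - μ x| ≤ β * v x} ≤ ENNReal.ofReal ((N * (t : ℝ) ^ 2)⁻¹) := by
    have hN : (1 : ℝ) ≤ N := by exact_mod_cast Fintype.card_pos_iff.2 ⟨x⟩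
    have ht' : (1 : ℝ) ≤ t := by exact_mod_cast ht
    simp_rw [not_le]
    rw [(hZlaw x).measure_eq (p := fun y ↦ β * v x < |y - μ x|)
        (measurableSet_lt measurable_const (by fun_prop)),
      ← exp_neg_sqrt_two_mul_log_sq_div_two (one_le_mul_of_one_le_of_one_le hN (one_le_pow₀ ht'))]
    exact gaussianReal_abs_sub_gt_le _ (hv x) (sqrt_nonneg _)
  have hsum : ∑ x, ℙ {ω | ¬ |Z x ω - μ x| ≤ β * v x} ≤ ENNReal.ofReal (1 / (t : ℝ) ^ 2) := by
    refine (Finset.sum_le_sum fun x _ ↦ hfail x).trans ?_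
    rw [Finset.sum_const, Finset.card_univ, nsmul_eq_mul, ← ENNReal.ofReal_natCast,
      ← ENNReal.ofReal_mul (Nat.cast_nonneg _)]
    refine ENNReal.ofReal_le_ofReal ?_
    rcases (Nat.cast_nonneg N : (0 : ℝ) ≤ N).eq_or_lt with hN | hN
    · simp [← hN]
    · rw [mul_inv, ← mul_assoc, mul_inv_cancel₀ hN.ne', one_mul, one_div]
  exact (tsub_le_tsub_left hsum 1).trans (one_sub_sum_measure_not_le_measure_forall ℙ _)

/-- Mathematical core of Lemmas 2 and 12: a sampled acquisition function with
Gaussian marginals of means `μ` and standard deviations `v` concentrates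
simultaneously at all points of the finite domain `X`, with failure probability
at most `1/t²`. No independence across `x` is required. -/
theorem gaussian_simultaneous_concentration
    {X : Type*} [Fintype X] [Nonempty X] (t : ℕ) (ht : 0 < t)
    {Ω : Type*} [MeasureSpace Ω] [IsProbabilityMeasure (ℙ : Measure Ω)]
    (Z : X → Ω → ℝ) (μ : X → ℝ) (v : X → ℝ) (hv : ∀ x, 0 ≤ v x)
    (hZ : ∀ x : X, Measure.map (Z x) ℙ = gaussianReal (μ x) ⟨(v x) ^ 2, sq_nonneg _⟩) :
    1 - ENNReal.ofReal (1 / (t : ℝ) ^ 2) ≤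
      ℙ {ω : Ω | ∀ x : X,
          |Z x ω - μ x| ≤ Real.sqrt (2 * Real.log ((Fintype.card X : ℝ) * (t : ℝ) ^ 2)) * v x} :=
  gaussian_simultaneous_concentration_general t ht Z μ v hv hZ
end

section
/- Let δ ∈ (0, 1), let X be a nonempty finite set, and let (Ω, ℙ) be a probability space. For each integer t ≥ 1 and each x ∈ X let Z_{t,x} : Ω → ℝ be a random variable whose law is gaussianReal (μ t x) ((s t x)²), where μ t x ∈ ℝ and s t x ≥ 0. Set β_t = 2·log(π²·t²·|X|/(3δ)). Then ℙ( for every integer t ≥ 1 and every x ∈ X, |Z_{t,x} − μ t x| ≤ β_t · s t x ) ≥ 1 − δ/2. (The mathematical core of Lemma 1: uniform Gaussian concentration over all iterations and all points of the finite domain via a union bound, with failure probability at most δ/2; no independence is required.) -/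
/-!
By the Chernoff bound for the standard Gaussian, `|Z_{t,x} - μ t x| > c · s t x` has
probability at most `2 exp (-c² / 2)`. For `c = β_t = 2 log A_t` with
`A_t = π² t² |X| / (3δ) ≥ e` this is at most `1 / A_t`, so a union bound over `x ∈ X`
and `t ≥ 1` bounds the failure probability by `(3δ / π²) ∑ 1 / t² = δ / 2`.
-/

open MeasureTheory ProbabilityTheory Real

open scoped NNReal ENNReal

lemma hasSubgaussianMGF_id_gaussianReal (v : ℝ≥0) :
    HasSubgaussianMGF id v (gaussianReal 0 v) where
  integrable_exp_mul := integrable_exp_mul_gaussianReal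
  mgf_le t := by simp [mgf_id_gaussianReal]

lemma gaussianReal_real_le_abs_le (v : ℝ≥0) {ε : ℝ} (hε : 0 ≤ ε) :
    (gaussianReal 0 v).real {y | ε ≤ |y|} ≤ 2 * exp (-ε ^ 2 / (2 * v)) := by
  have hX := hasSubgaussianMGF_id_gaussianReal v
  have hsplit : {y : ℝ | ε ≤ |y|} = {y | ε ≤ id y} ∪ {y | ε ≤ (-id) y} := by
    ext y; simp [le_abs]
  rw [hsplit]
  linarith [measureReal_union_le (μ := gaussianReal 0 v) {y | ε ≤ id y} {y | ε ≤ (-id) y},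
    hX.measure_ge_le hε, hX.neg.measure_ge_le hε]

lemma gaussianReal_eq_map_mul_add (m σ : ℝ) :
    gaussianReal m ⟨σ ^ 2, sq_nonneg σ⟩ = (gaussianReal 0 1).map (fun y ↦ σ * y + m) := by
  have h := gaussianReal_map_const_mul (μ := 0) (v := 1) σ
  rw [mul_zero, mul_one] at h
  rw [show (fun y ↦ σ * y + m) = (· + m) ∘ (σ * ·) from rfl,
    ← Measure.map_map (by fun_prop) (by fun_prop), h, gaussianReal_map_add_const, zero_add]
  rfl

lemma gaussianReal_lt_abs_sub_le (m : ℝ) {σ c : ℝ} (hσ : 0 ≤ σ) (hc : 0 ≤ c) :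
    gaussianReal m ⟨σ ^ 2, sq_nonneg σ⟩ {y | c * σ < |y - m|}
      ≤ ENNReal.ofReal (2 * exp (-c ^ 2 / 2)) := by
  have hS : MeasurableSet {y : ℝ | c * σ < |y - m|} :=
    measurableSet_lt measurable_const (by fun_prop)
  -- standardizing also covers the degenerate case `σ = 0`, where the preimage below is empty
  rw [gaussianReal_eq_map_mul_add, Measure.map_apply (by fun_prop) hS]
  have hsub : (fun y ↦ σ * y + m) ⁻¹' {y | c * σ < |y - m|} ⊆ {y | c ≤ |y|} := by
    intro y hy
    simp only [Set.mem_preimage, Set.mem_ofPred_eq, add_sub_cancel_right, abs_mul,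
      abs_of_nonneg hσ, mul_comm c] at hy
    exact (lt_of_mul_lt_mul_left hy hσ).le
  calc _ ≤ gaussianReal 0 1 {y | c ≤ |y|} := measure_mono hsub
    _ = ENNReal.ofReal ((gaussianReal 0 1).real {y | c ≤ |y|}) := (ofReal_measureReal).symm
    _ ≤ _ := ENNReal.ofReal_le_ofReal (by simpa using gaussianReal_real_le_abs_le 1 hc)

lemma two_mul_exp_neg_le_exp_neg {L : ℝ} (hL : 1 ≤ L) :
    2 * exp (-(2 * L) ^ 2 / 2) ≤ exp (-L) := by
  have h2 : (2 : ℝ) ≤ exp (2 * L ^ 2 - L) := by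
    linarith [add_one_le_exp (2 * L ^ 2 - L), show (1 : ℝ) ≤ 2 * L ^ 2 - L by nlinarith]
  calc 2 * exp (-(2 * L) ^ 2 / 2) ≤ exp (2 * L ^ 2 - L) * exp (-(2 * L) ^ 2 / 2) := by gcongr
    _ = exp (-L) := by rw [← exp_add]; ring_nf

lemma measure_two_mul_log_mul_lt_abs_sub_le {Ω : Type*} [MeasurableSpace Ω] {P : Measure Ω}
    {Y : Ω → ℝ} {m σ A : ℝ} (hσ : 0 ≤ σ)
    (hY : P.map Y = gaussianReal m ⟨σ ^ 2, sq_nonneg σ⟩)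
    (hA : exp 1 ≤ A) :
    P {ω | 2 * log A * σ < |Y ω - m|} ≤ ENNReal.ofReal A⁻¹ := by
  have hA0 : 0 < A := (exp_pos 1).trans_le hA
  have hL : 1 ≤ log A := (le_log_iff_exp_le hA0).2 hA
  have hYm : AEMeasurable Y P :=
    aemeasurable_of_map_neZero (hY ▸ (instIsProbabilityMeasureGaussianReal _ _).neZero)
  have hS : MeasurableSet {y : ℝ | 2 * log A * σ < |y - m|} :=
    measurableSet_lt measurable_const (by fun_prop)
  calc P {ω | 2 * log A * σ < |Y ω - m|}
      = P.map Y {y | 2 * log A * σ < |y - m|} := (Measure.map_apply_of_aemeasurable hYm hS).symm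
    _ ≤ ENNReal.ofReal (2 * exp (-(2 * log A) ^ 2 / 2)) := by
        rw [hY]; exact gaussianReal_lt_abs_sub_le m hσ (by linarith)
    _ ≤ ENNReal.ofReal A⁻¹ := by
        gcongr
        simpa [exp_neg, exp_log hA0] using two_mul_exp_neg_le_exp_neg hL

lemma one_sub_le_measure_of_measure_compl_le {Ω : Type*} [MeasurableSpace Ω] {P : Measure Ω}
    [IsProbabilityMeasure P] {s : Set Ω} {ε : ℝ≥0∞} (h : P sᶜ ≤ ε) : 1 - ε ≤ P s := by
  rw [tsub_le_iff_right]
  calc 1 = P (s ∪ sᶜ) := by rw [Set.union_compl_self, measure_univ]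
    _ ≤ P s + P sᶜ := measure_union_le _ _
    _ ≤ P s + ε := by gcongr

lemma tsum_ofReal_div_sq {c : ℝ} (hc : 0 ≤ c) :
    ∑' n : ℕ, ENNReal.ofReal (c / n ^ 2) = ENNReal.ofReal (c * π ^ 2 / 6) := by
  have h := hasSum_zeta_two.mul_left c
  simp only [mul_one_div] at h
  rw [← ENNReal.ofReal_tsum_of_nonneg (fun n ↦ by positivity) h.summable, h.tsum_eq,
    mul_div_assoc]

lemma sum_ofReal_div_card_le (X : Type*) [Fintype X] {a : ℝ} (ha : 0 ≤ a) :
    ∑ _x : X, ENNReal.ofReal (a / Fintype.card X) ≤ ENNReal.ofReal a := by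
  rw [Finset.sum_const, Finset.card_univ, nsmul_eq_mul, ← ENNReal.ofReal_natCast,
    ← ENNReal.ofReal_mul (by positivity)]
  gcongr
  rcases (Nat.cast_nonneg (α := ℝ) (Fintype.card X)).eq_or_lt with h | h
  · simp [← h, ha]
  · rw [mul_div_cancel₀ _ h.ne']

lemma measure_two_mul_log_pi_sq_mul_lt_abs_sub_le {Ω : Type*} [MeasurableSpace Ω]
    {P : Measure Ω} {Y : Ω → ℝ} {m σ t n δ : ℝ} (hσ : 0 ≤ σ)
    (hY : P.map Y = gaussianReal m ⟨σ ^ 2, sq_nonneg σ⟩) (ht : 1 ≤ t) (hn : 1 ≤ n)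
    (hδ0 : 0 < δ) (hδ1 : δ ≤ 1) :
    P {ω | 2 * log (π ^ 2 * t ^ 2 * n / (3 * δ)) * σ < |Y ω - m|}
      ≤ ENNReal.ofReal (3 * δ / π ^ 2 / t ^ 2 / n) := by
  have hπ : 9 ≤ π ^ 2 := by nlinarith [pi_gt_three]
  have hA : 3 ≤ π ^ 2 * t ^ 2 * n / (3 * δ) := by
    have : 9 * 1 * 1 ≤ π ^ 2 * t ^ 2 * n := by gcongr; nlinarith
    rw [le_div_iff₀ (by positivity)]
    nlinarith
  refine (measure_two_mul_log_mul_lt_abs_sub_le hσ hY (exp_one_lt_three.le.trans hA)).trans_eq ?_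
  congr 1
  field_simp

theorem gaussian_uniform_concentration_all_iterations_general
    (δ : ℝ) (hδ : δ ∈ Set.Ioo (0 : ℝ) 1)
    {X : Type*} [Fintype X]
    {Ω : Type*} [MeasureSpace Ω] [IsProbabilityMeasure (ℙ : Measure Ω)]
    (Z : ℕ → X → Ω → ℝ) (μ : ℕ → X → ℝ) (s : ℕ → X → ℝ)
    (hs : ∀ t x, 0 ≤ s t x)
    (hZ : ∀ t : ℕ, 1 ≤ t → ∀ x : X,
      Measure.map (Z t x) ℙ = gaussianReal (μ t x) ⟨(s t x) ^ 2, sq_nonneg _⟩) :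
    1 - ENNReal.ofReal (δ / 2) ≤
      ℙ {ω : Ω | ∀ t : ℕ, 1 ≤ t → ∀ x : X,
          |Z t x ω - μ t x| ≤
            2 * Real.log (π ^ 2 * (t : ℝ) ^ 2 * (Fintype.card X : ℝ) / (3 * δ)) * s t x} := by
  obtain ⟨hδ0, hδ1⟩ := hδ
  set n : ℝ := (Fintype.card X : ℝ)
  set β : ℕ → ℝ := fun t ↦ 2 * log (π ^ 2 * (t : ℝ) ^ 2 * n / (3 * δ))
  have hbad : ∀ t x, ℙ {ω | 1 ≤ t ∧ β t * s t x < |Z t x ω - μ t x|}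
      ≤ ENNReal.ofReal (3 * δ / π ^ 2 / t ^ 2 / n) := by
    intro t x
    rcases Nat.eq_zero_or_pos t with rfl | ht
    · simp
    exact (measure_mono fun ω hω ↦ hω.2).trans <| measure_two_mul_log_pi_sq_mul_lt_abs_sub_le
      (hs t x) (hZ t ht x) (by exact_mod_cast ht) (Nat.one_le_cast.2 (Fintype.card_pos_iff.2 ⟨x⟩))
      hδ0 hδ1.le
  apply one_sub_le_measure_of_measure_compl_le
  calc _ ≤ ℙ (⋃ t, ⋃ x, {ω | 1 ≤ t ∧ β t * s t x < |Z t x ω - μ t x|}) := by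
        refine measure_mono fun ω hω ↦ ?_
        simp only [Set.mem_compl_iff, Set.mem_ofPred_eq, not_forall, not_le] at hω
        obtain ⟨t, ht, x, hx⟩ := hω
        exact Set.mem_iUnion₂.2 ⟨t, x, ht, hx⟩
    _ ≤ ∑' t : ℕ, ∑ x : X, ENNReal.ofReal (3 * δ / π ^ 2 / t ^ 2 / n) :=
        (measure_iUnion_le _).trans <| ENNReal.tsum_le_tsum fun t ↦
          (measure_iUnion_fintype_le _ _).trans (Finset.sum_le_sum fun x _ ↦ hbad t x)
    _ ≤ ∑' t : ℕ, ENNReal.ofReal (3 * δ / π ^ 2 / t ^ 2) :=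
        ENNReal.tsum_le_tsum fun t ↦ sum_ofReal_div_card_le X (by positivity)
    _ = ENNReal.ofReal (δ / 2) := by
        rw [tsum_ofReal_div_sq (by positivity)]
        congr 1
        field_simp
        ring

/-- Mathematical core of Lemma 1: uniform Gaussian concentration over all iterations
`t ≥ 1` and all points of the finite domain `X` via a union bound, with failure
probability at most `δ/2`, where `β_t = 2·log(π²·t²·|X|/(3δ))`.
No independence is required. -/
theorem gaussian_uniform_concentration_all_iterations
    (δ : ℝ) (hδ : δ ∈ Set.Ioo (0 : ℝ) 1)
    {X : Type*} [Fintype X] [Nonempty X]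
    {Ω : Type*} [MeasureSpace Ω] [IsProbabilityMeasure (ℙ : Measure Ω)]
    (Z : ℕ → X → Ω → ℝ) (μ : ℕ → X → ℝ) (s : ℕ → X → ℝ)
    (hs : ∀ t x, 0 ≤ s t x)
    (hZ : ∀ t : ℕ, 1 ≤ t → ∀ x : X,
      Measure.map (Z t x) ℙ = gaussianReal (μ t x) ⟨(s t x) ^ 2, sq_nonneg _⟩) :
    1 - ENNReal.ofReal (δ / 2) ≤
      ℙ {ω : Ω | ∀ t : ℕ, 1 ≤ t → ∀ x : X,
          |Z t x ω - μ t x| ≤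
            2 * Real.log (π ^ 2 * (t : ℝ) ^ 2 * (Fintype.card X : ℝ) / (3 * δ)) * s t x} :=
  gaussian_uniform_concentration_all_iterations_general δ hδ Z μ s hs hZ
end

section
/- Let n be a positive integer, σ ∈ (0, 1], η ∈ [0, 1], K₀ > 0, and set K̂₀ = max(1, K₀). Let K, K̃ ∈ ℝ^{n×n} be symmetric positive semidefinite matrices with |K_{ij} − K̃_{ij}| ≤ η for all i, j; let k, k̃ ∈ ℝⁿ with |k_i| ≤ K₀ and |k_i − k̃_i| ≤ η for all i; and let κ, κ̃ ∈ ℝ with |κ − κ̃| ≤ η. Define the posterior variances v = κ − kᵀ(K + σ²I)⁻¹k and ṽ = κ̃ − k̃ᵀ(K̃ + σ²I)⁻¹k̃. Then |v − ṽ| ≤ η·(1 + 4·K̂₀²·n²/σ⁴). (The main displayed computation in the proof of Lemma 9: the difference of GP posterior variances under the exact and empirical NTK is controlled by the kernel approximation error η = (L+1)ε.) -/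
/-! The two posterior variances differ by three terms: `κ - κ̃`; `uᵀ(K - K̃)w` with
`u = (K + σ²I)⁻¹k` and `w = (K̃ + σ²I)⁻¹k`, by the resolvent identity
`A⁻¹ - B⁻¹ = A⁻¹(B - A)B⁻¹`; and `(k - k̃)ᵀ(K̃ + σ²I)⁻¹(k + k̃)`, by symmetry of the inverse.
For positive semidefinite `S` the form `uᵀ(S + σ²I)u ≥ σ²‖u‖₂²` gives
`‖(S + σ²I)⁻¹x‖₂ ≤ ‖x‖₂ / σ²`, and a matrix with entries bounded by `η` has bilinear form
bounded by `nη‖u‖₂‖w‖₂` (via `‖u‖₁ ≤ √n ‖u‖₂`), so Cauchy–Schwarz bounds each term. -/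
open Matrix WithLp

namespace Matrix

variable {ι : Type*}

lemma PosSemidef.posDef_add_smul_one [DecidableEq ι] {S : Matrix ι ι ℝ} (hS : S.PosSemidef)
    {c : ℝ} (hc : 0 < c) : (S + c • 1).PosDef :=
  PosDef.posSemidef_add hS (PosDef.one.smul hc)

variable [Fintype ι]

lemma abs_dotProduct_le_norm_mul_norm (x y : ι → ℝ) :
    |x ⬝ᵥ y| ≤ ‖toLp 2 x‖ * ‖toLp 2 y‖ := by
  have := abs_real_inner_le_norm (toLp 2 x) (toLp 2 y)
  rwa [EuclideanSpace.inner_toLp_toLp, star_trivial, dotProduct_comm] at this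

lemma sum_abs_le_sqrt_card_mul_norm (x : ι → ℝ) :
    ∑ i, |x i| ≤ √(Fintype.card ι) * ‖toLp 2 x‖ := by
  simpa [EuclideanSpace.norm_eq] using Real.sum_mul_le_sqrt_mul_sqrt Finset.univ 1 (|x ·|)

lemma norm_toLp_le_sqrt_card_mul {x : ι → ℝ} {c : ℝ} (hc : 0 ≤ c) (hx : ∀ i, |x i| ≤ c) :
    ‖toLp 2 x‖ ≤ √(Fintype.card ι) * c := by
  have hsq : ∀ i, x i ^ 2 ≤ c ^ 2 := fun i => sq_le_sq' (abs_le.mp (hx i)).1 (abs_le.mp (hx i)).2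
  calc ‖toLp 2 x‖ = √(∑ i, x i ^ 2) := by simp [EuclideanSpace.norm_eq]
    _ ≤ √(Fintype.card ι * c ^ 2) := by
        gcongr
        exact (Finset.sum_le_sum fun i _ => hsq i).trans_eq (by simp)
    _ = √(Fintype.card ι) * c := by rw [Real.sqrt_mul (Nat.cast_nonneg _), Real.sqrt_sq hc]

lemma abs_dotProduct_mulVec_le_mul_sum_abs {D : Matrix ι ι ℝ} {η : ℝ} (hD : ∀ i j, |D i j| ≤ η)
    (u w : ι → ℝ) : |u ⬝ᵥ D *ᵥ w| ≤ η * (∑ i, |u i|) * ∑ j, |w j| := by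
  calc |u ⬝ᵥ D *ᵥ w| = |∑ i, ∑ j, u i * D i j * w j| := by
        simp only [dotProduct, mulVec, Finset.mul_sum, mul_assoc]
    _ ≤ ∑ i, ∑ j, |u i| * η * |w j| := by
        refine (Finset.abs_sum_le_sum_abs _ _).trans (Finset.sum_le_sum fun i _ => ?_)
        refine (Finset.abs_sum_le_sum_abs _ _).trans (Finset.sum_le_sum fun j _ => ?_)
        rw [abs_mul, abs_mul]
        gcongr
        exact hD i j
    _ = η * (∑ i, |u i|) * ∑ j, |w j| := by
        rw [mul_assoc, Finset.sum_mul_sum, Finset.mul_sum]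
        simp only [Finset.mul_sum]
        exact Finset.sum_congr rfl fun i _ => Finset.sum_congr rfl fun j _ => by ring

lemma abs_dotProduct_mulVec_le_card_mul {D : Matrix ι ι ℝ} {η : ℝ} (hη : 0 ≤ η)
    (hD : ∀ i j, |D i j| ≤ η) (u w : ι → ℝ) :
    |u ⬝ᵥ D *ᵥ w| ≤ Fintype.card ι * η * ‖toLp 2 u‖ * ‖toLp 2 w‖ := by
  calc |u ⬝ᵥ D *ᵥ w| ≤ η * (∑ i, |u i|) * ∑ j, |w j| := abs_dotProduct_mulVec_le_mul_sum_abs hD u w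
    _ ≤ η * (√(Fintype.card ι) * ‖toLp 2 u‖) * (√(Fintype.card ι) * ‖toLp 2 w‖) := by
        gcongr <;> exact sum_abs_le_sqrt_card_mul_norm _
    _ = Fintype.card ι * η * ‖toLp 2 u‖ * ‖toLp 2 w‖ := by
        linear_combination η * ‖toLp 2 u‖ * ‖toLp 2 w‖ *
          Real.mul_self_sqrt (Nat.cast_nonneg (Fintype.card ι))

lemma IsSymm.dotProduct_mulVec_sub {α : Type*} [CommRing α] {M : Matrix ι ι α}
    (hM : M.IsSymm) (x y : ι → α) :
    x ⬝ᵥ M *ᵥ x - y ⬝ᵥ M *ᵥ y = (x - y) ⬝ᵥ M *ᵥ (x + y) := by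
  have hxy : x ⬝ᵥ M *ᵥ y = y ⬝ᵥ M *ᵥ x := by
    rw [← dotProduct_transpose_mulVec, hM.eq]
  rw [mulVec_add, dotProduct_add, sub_dotProduct, sub_dotProduct, hxy]
  abel

variable [DecidableEq ι]

lemma IsSymm.dotProduct_inv_mulVec_sub {α : Type*} [CommRing α] {A B : Matrix ι ι α}
    (hA : A.IsSymm) (hAB : IsUnit A ↔ IsUnit B) (x : ι → α) :
    x ⬝ᵥ A⁻¹ *ᵥ x - x ⬝ᵥ B⁻¹ *ᵥ x = (A⁻¹ *ᵥ x) ⬝ᵥ (B - A) *ᵥ (B⁻¹ *ᵥ x) := by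
  rw [← dotProduct_sub, ← sub_mulVec, inv_sub_inv hAB, ← mulVec_mulVec, ← mulVec_mulVec,
    ← dotProduct_transpose_mulVec, hA.inv.eq, dotProduct_comm]

lemma PosSemidef.mul_norm_le_norm_add_smul_one_mulVec {S : Matrix ι ι ℝ} (hS : S.PosSemidef)
    (c : ℝ) (u : ι → ℝ) :
    c * ‖toLp 2 u‖ ≤ ‖toLp 2 ((S + c • 1) *ᵥ u)‖ := by
  have hquad : c * ‖toLp 2 u‖ ^ 2 ≤ u ⬝ᵥ (S + c • 1) *ᵥ u := by
    have := hS.dotProduct_mulVec_nonneg u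
    rw [star_trivial] at this
    rw [← real_inner_self_eq_norm_sq, EuclideanSpace.inner_toLp_toLp, star_trivial, add_mulVec,
      dotProduct_add, smul_mulVec, one_mulVec, dotProduct_smul, smul_eq_mul]
    linarith
  have hcs := (le_abs_self _).trans (abs_dotProduct_le_norm_mul_norm u ((S + c • 1) *ᵥ u))
  rcases (norm_nonneg (toLp 2 u)).eq_or_lt with hu | hu
  · rw [← hu, mul_zero]
    exact norm_nonneg _
  · nlinarith

lemma PosSemidef.norm_inv_add_smul_one_mulVec_le {S : Matrix ι ι ℝ} (hS : S.PosSemidef)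
    {c : ℝ} (hc : 0 < c) (x : ι → ℝ) :
    ‖toLp 2 ((S + c • 1)⁻¹ *ᵥ x)‖ ≤ ‖toLp 2 x‖ / c := by
  have hunit := (hS.posDef_add_smul_one hc).isUnit
  have := hS.mul_norm_le_norm_add_smul_one_mulVec c ((S + c • 1)⁻¹ *ᵥ x)
  rwa [mulVec_mulVec, mul_nonsing_inv _ ((isUnit_iff_isUnit_det _).mp hunit), one_mulVec,
    ← le_div_iff₀' hc] at this

end Matrix

section PosteriorVariance

variable {ι : Type*} [Fintype ι] [DecidableEq ι]

noncomputable def posteriorVariance (K : Matrix ι ι ℝ) (σ κ : ℝ) (k : ι → ℝ) : ℝ :=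
  κ - k ⬝ᵥ (K + σ ^ 2 • 1)⁻¹ *ᵥ k

lemma posteriorVariance_sub_posteriorVariance {K Ktil : Matrix ι ι ℝ} (hK : K.PosSemidef)
    (hKtil : Ktil.PosSemidef) {σ : ℝ} (hσ : σ ≠ 0) (κ κtil : ℝ) (k ktil : ι → ℝ) :
    posteriorVariance K σ κ k - posteriorVariance Ktil σ κtil ktil =
      (κ - κtil) + ((K + σ ^ 2 • 1)⁻¹ *ᵥ k) ⬝ᵥ (K - Ktil) *ᵥ ((Ktil + σ ^ 2 • 1)⁻¹ *ᵥ k) -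
        (k - ktil) ⬝ᵥ (Ktil + σ ^ 2 • 1)⁻¹ *ᵥ (k + ktil) := by
  have hσ2 := sq_pos_of_ne_zero hσ
  have hA := hK.posDef_add_smul_one hσ2
  have hB := hKtil.posDef_add_smul_one hσ2
  have hquad := (isHermitian_iff_isSymm.mp hA.isHermitian).dotProduct_inv_mulVec_sub
    (iff_of_true hA.isUnit hB.isUnit) k
  have hsymm := (isHermitian_iff_isSymm.mp hB.isHermitian).inv.dotProduct_mulVec_sub k ktil
  rw [add_sub_add_right_eq_sub, ← neg_sub K Ktil, neg_mulVec, dotProduct_neg] at hquad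
  unfold posteriorVariance
  linarith

lemma abs_posteriorVariance_sub_le {K Ktil : Matrix ι ι ℝ} (hK : K.PosSemidef)
    (hKtil : Ktil.PosSemidef) {σ η : ℝ} (hσ : σ ≠ 0) (hη : 0 ≤ η)
    (hKdiff : ∀ i j, |K i j - Ktil i j| ≤ η) (κ κtil : ℝ) (k ktil : ι → ℝ) :
    |posteriorVariance K σ κ k - posteriorVariance Ktil σ κtil ktil| ≤
      |κ - κtil| + Fintype.card ι * η * ‖toLp 2 k‖ ^ 2 / σ ^ 4 +
        ‖toLp 2 (k - ktil)‖ * ‖toLp 2 (k + ktil)‖ / σ ^ 2 := by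
  have hσ2 := sq_pos_of_ne_zero hσ
  have hu := hK.norm_inv_add_smul_one_mulVec_le hσ2 k
  have hw := hKtil.norm_inv_add_smul_one_mulVec_le hσ2 k
  have hz := hKtil.norm_inv_add_smul_one_mulVec_le hσ2 (k + ktil)
  rw [posteriorVariance_sub_posteriorVariance hK hKtil hσ]
  calc _ ≤ |κ - κtil| +
        |((K + σ ^ 2 • 1)⁻¹ *ᵥ k) ⬝ᵥ (K - Ktil) *ᵥ ((Ktil + σ ^ 2 • 1)⁻¹ *ᵥ k)| +
        |(k - ktil) ⬝ᵥ (Ktil + σ ^ 2 • 1)⁻¹ *ᵥ (k + ktil)| :=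
        (abs_sub _ _).trans (add_le_add_left (abs_add_le _ _) _)
    _ ≤ |κ - κtil| + Fintype.card ι * η * ‖toLp 2 ((K + σ ^ 2 • 1)⁻¹ *ᵥ k)‖ *
          ‖toLp 2 ((Ktil + σ ^ 2 • 1)⁻¹ *ᵥ k)‖ +
        ‖toLp 2 (k - ktil)‖ * ‖toLp 2 ((Ktil + σ ^ 2 • 1)⁻¹ *ᵥ (k + ktil))‖ := by
        gcongr
        · exact abs_dotProduct_mulVec_le_card_mul hη hKdiff _ _
        · exact abs_dotProduct_le_norm_mul_norm _ _
    _ ≤ |κ - κtil| + Fintype.card ι * η * (‖toLp 2 k‖ / σ ^ 2) * (‖toLp 2 k‖ / σ ^ 2) +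
        ‖toLp 2 (k - ktil)‖ * (‖toLp 2 (k + ktil)‖ / σ ^ 2) := by
        gcongr
    _ = _ := by ring

lemma abs_posteriorVariance_sub_le_of_abs_le {K Ktil : Matrix ι ι ℝ} (hK : K.PosSemidef)
    (hKtil : Ktil.PosSemidef) {σ η c : ℝ} (hσ : σ ≠ 0) (hη : 0 ≤ η) (hc : 0 ≤ c)
    (hKdiff : ∀ i j, |K i j - Ktil i j| ≤ η) {k ktil : ι → ℝ} (hk : ∀ i, |k i| ≤ c)
    (hkdiff : ∀ i, |k i - ktil i| ≤ η) {κ κtil : ℝ} (hκdiff : |κ - κtil| ≤ η) :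
    |posteriorVariance K σ κ k - posteriorVariance Ktil σ κtil ktil| ≤
      η + Fintype.card ι ^ 2 * η * c ^ 2 / σ ^ 4 +
        Fintype.card ι * η * (2 * c + η) / σ ^ 2 := by
  have hsum : ∀ i, |(k + ktil) i| ≤ 2 * c + η := fun i => by
    obtain ⟨hk₁, hk₂⟩ := abs_le.mp (hk i)
    obtain ⟨hd₁, hd₂⟩ := abs_le.mp (hkdiff i)
    rw [Pi.add_apply, abs_le]
    constructor <;> linarith
  have hk' := norm_toLp_le_sqrt_card_mul hc hk
  have hdiff := norm_toLp_le_sqrt_card_mul (x := k - ktil) hη hkdiff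
  have hsum' := norm_toLp_le_sqrt_card_mul (by positivity) hsum
  have hcard := Real.mul_self_sqrt (Nat.cast_nonneg (Fintype.card ι))
  calc _ ≤ _ := abs_posteriorVariance_sub_le hK hKtil hσ hη hKdiff κ κtil k ktil
    _ ≤ η + Fintype.card ι * η * (√(Fintype.card ι) * c) ^ 2 / σ ^ 4 +
        √(Fintype.card ι) * η * (√(Fintype.card ι) * (2 * c + η)) / σ ^ 2 := by
        gcongr
    _ = _ := by
        linear_combination (Fintype.card ι * η * c ^ 2 / σ ^ 4 + η * (2 * c + η) / σ ^ 2) * hcard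

end PosteriorVariance

theorem posterior_variance_perturbation_general
    (n : ℕ) (σ : ℝ) (hσ : 0 < σ) (hσ1 : σ ≤ 1)
    (η : ℝ) (hη : 0 ≤ η) (hη1 : η ≤ 1) (K₀ : ℝ)
    (K Ktil : Matrix (Fin n) (Fin n) ℝ) (hK : K.PosSemidef) (hKtil : Ktil.PosSemidef)
    (hKdiff : ∀ i j, |K i j - Ktil i j| ≤ η)
    (k ktil : Fin n → ℝ) (hk : ∀ i, |k i| ≤ K₀) (hkdiff : ∀ i, |k i - ktil i| ≤ η)
    (κ κtil : ℝ) (hκdiff : |κ - κtil| ≤ η) :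
    |(κ - k ⬝ᵥ ((K + σ ^ 2 • (1 : Matrix (Fin n) (Fin n) ℝ))⁻¹ *ᵥ k)) -
        (κtil - ktil ⬝ᵥ ((Ktil + σ ^ 2 • (1 : Matrix (Fin n) (Fin n) ℝ))⁻¹ *ᵥ ktil))| ≤
      η * (1 + 4 * max 1 K₀ ^ 2 * (n : ℝ) ^ 2 / σ ^ 4) := by
  have hbound := abs_posteriorVariance_sub_le_of_abs_le hK hKtil hσ.ne' hη
    (zero_le_one.trans (le_max_left 1 K₀)) hKdiff (fun i => (hk i).trans (le_max_right 1 K₀))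
    hkdiff hκdiff
  rw [Fintype.card_fin] at hbound
  set c := max 1 K₀
  have hc : 1 ≤ c := le_max_left 1 K₀
  have hn : (n : ℝ) ≤ n ^ 2 := by exact_mod_cast Nat.le_self_pow two_ne_zero n
  have hσ2 : σ ^ 2 ≤ 1 := pow_le_one₀ hσ.le hσ1
  have hlin : (n : ℝ) * η * (2 * c + η) / σ ^ 2 ≤ n ^ 2 * η * (3 * c ^ 2) / σ ^ 4 := by
    calc (n : ℝ) * η * (2 * c + η) / σ ^ 2 = n * η * (2 * c + η) * σ ^ 2 / σ ^ 4 := by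
          field_simp
      _ ≤ n ^ 2 * η * (3 * c ^ 2) * 1 / σ ^ 4 := by
          gcongr
          nlinarith
      _ = _ := by rw [mul_one]
  calc _ ≤ _ := hbound
    _ ≤ η + n ^ 2 * η * c ^ 2 / σ ^ 4 + n ^ 2 * η * (3 * c ^ 2) / σ ^ 4 := by gcongr
    _ = _ := by ring

/-- Main displayed computation in the proof of Lemma 9: the difference of GP posterior
variances under the exact and empirical NTK is controlled by the entrywise kernel
approximation error `η`. -/
theorem posterior_variance_perturbation
    (n : ℕ) (hn : 0 < n) (σ : ℝ) (hσ : 0 < σ) (hσ1 : σ ≤ 1)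
    (η : ℝ) (hη : 0 ≤ η) (hη1 : η ≤ 1) (K₀ : ℝ) (hK₀ : 0 < K₀)
    (K Ktil : Matrix (Fin n) (Fin n) ℝ) (hK : K.PosSemidef) (hKtil : Ktil.PosSemidef)
    (hKdiff : ∀ i j, |K i j - Ktil i j| ≤ η)
    (k ktil : Fin n → ℝ) (hk : ∀ i, |k i| ≤ K₀) (hkdiff : ∀ i, |k i - ktil i| ≤ η)
    (κ κtil : ℝ) (hκdiff : |κ - κtil| ≤ η) :
    |(κ - k ⬝ᵥ ((K + σ ^ 2 • (1 : Matrix (Fin n) (Fin n) ℝ))⁻¹ *ᵥ k)) -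
        (κtil - ktil ⬝ᵥ ((Ktil + σ ^ 2 • (1 : Matrix (Fin n) (Fin n) ℝ))⁻¹ *ᵥ ktil))| ≤
      η * (1 + 4 * max 1 K₀ ^ 2 * (n : ℝ) ^ 2 / σ ^ 4) :=
  posterior_variance_perturbation_general n σ hσ hσ1 η hη hη1 K₀ K Ktil hK hKtil hKdiff k ktil hk
    hkdiff κ κtil hκdiff
end

section
/- Let X be a set and let k, k̃ : X × X → ℝ be symmetric positive semidefinite kernels such that |k(x, x')| ≤ K₀ and |k(x, x') − k̃(x, x')| ≤ η for all x, x' ∈ X, where K₀ > 0 and η ∈ [0, 1]; set K̂₀ = max(1, K₀) and let σ ∈ (0, 1]. Fix points x₁, …, x_n ∈ X and a test point x ∈ X, and define the Gram matrix K = (k(x_i, x_j))_{i,j}, the vector kvec = (k(x, x_i))_i, the posterior variance v = k(x, x) − kvecᵀ(K + σ²I)⁻¹kvec, and correspondingly ṽ for k̃. Then v ≥ 0, ṽ ≥ 0, and |√v − √ṽ| ≤ √(η·(1 + 4·K̂₀²·n²/σ⁴)). (Lemma 9 of the paper: the GP posterior standard deviations computed with the exact NTK and with the empirical NTK differ by at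 most √((L+1)ε·(1 + 4K̂₀²t²/σ⁴)) when the kernels differ entrywise by at most η = (L+1)ε.) -/
/-!
Write `w = (K + σ²I)⁻¹ k_z` for the posterior weights. Positivity of the Gram matrix of
`z, x₁, …, x_n` at the vector `(1, -w)`, together with `K w = k_z - σ² w`, gives
`σ² ‖w‖² ≤ v ≤ k(z, z)`, so `‖w‖₁² ≤ n ‖w‖² ≤ n K̂₀ / σ²` (and `2 n K̂₀ / σ²` for `k̃`).
By symmetry of `K̃ + σ²I`, the difference `k_zᵀ w - k̃_zᵀ w̃` splits into three terms, each
linear in the perturbation `k - k̃`, which bounds `|v - ṽ|` by `η (1 + ‖w‖₁ + ‖w̃‖₁ + ‖w‖₁ ‖w̃‖₁)`.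
Finally `|√v - √ṽ| ≤ √|v - ṽ|`.
-/

open Matrix

/-- `k : X → X → ℝ` is a symmetric positive semidefinite kernel: it is symmetric and
every finite Gram matrix is positive semidefinite. -/
def IsPSDKernel {X : Type*} (k : X → X → ℝ) : Prop :=
  (∀ x x', k x x' = k x' x) ∧
    ∀ (m : ℕ) (x : Fin m → X), (Matrix.of fun i j => k (x i) (x j)).PosSemidef

/-- The GP posterior variance at a test point `z`, given a kernel `k`, a noise level
`σ` and observed inputs `x₁, …, x_n`:
`v = k(z,z) − kvecᵀ(K + σ²I)⁻¹kvec` where `K = (k(x_i,x_j))_{i,j}` and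
`kvec = (k(z,x_i))_i`. -/
noncomputable def postVar {X : Type*} (k : X → X → ℝ) (σ : ℝ) {n : ℕ}
    (x : Fin n → X) (z : X) : ℝ :=
  k z z - (fun i => k z (x i)) ⬝ᵥ
    (((Matrix.of fun i j => k (x i) (x j)) + σ ^ 2 • (1 : Matrix (Fin n) (Fin n) ℝ))⁻¹ *ᵥ
      fun i => k z (x i))

open Finset

namespace Matrix

variable {ι : Type*} [Fintype ι]

lemma dotProduct_sub_dotProduct_eq_of_mulVec_eq {A B : Matrix ι ι ℝ} (hB : B.IsSymm)
    {v v' w w' : ι → ℝ} (hw : A *ᵥ w = v) (hw' : B *ᵥ w' = v') :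
    v ⬝ᵥ w - v' ⬝ᵥ w' = (v - v') ⬝ᵥ w + w' ⬝ᵥ ((B - A) *ᵥ w) + w' ⬝ᵥ (v - v') := by
  have hBw : w' ⬝ᵥ (B *ᵥ w) = v' ⬝ᵥ w := by
    rw [← hB.eq, dotProduct_transpose_mulVec, hw', dotProduct_comm]
  rw [sub_mulVec, dotProduct_sub, hBw, hw, sub_dotProduct, dotProduct_sub,
    dotProduct_comm w' v, dotProduct_comm w' v']
  ring

lemma abs_dotProduct_le_of_abs_le {u : ι → ℝ} {η : ℝ} (hu : ∀ i, |u i| ≤ η)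
    (v : ι → ℝ) : |u ⬝ᵥ v| ≤ η * ∑ i, |v i| := by
  calc |u ⬝ᵥ v| ≤ ∑ i, |u i| * |v i| := by
        simpa only [dotProduct, abs_mul] using abs_sum_le_sum_abs (fun i => u i * v i) univ
    _ ≤ ∑ i, η * |v i| := by gcongr with i; exact hu i
    _ = η * ∑ i, |v i| := (mul_sum _ _ _).symm

lemma abs_dotProduct_mulVec_le_of_abs_le {E : Matrix ι ι ℝ} {η : ℝ}
    (hE : ∀ i j, |E i j| ≤ η) (u v : ι → ℝ) :
    |u ⬝ᵥ (E *ᵥ v)| ≤ η * (∑ i, |u i|) * ∑ j, |v j| := by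
  rw [dotProduct_comm, mul_right_comm]
  exact abs_dotProduct_le_of_abs_le
    (fun i => abs_dotProduct_le_of_abs_le (hE i) v) u

lemma sq_sum_abs_le_card_mul_dotProduct_self (w : ι → ℝ) :
    (∑ i, |w i|) ^ 2 ≤ Fintype.card ι * (w ⬝ᵥ w) := by
  simpa [dotProduct, sq_abs, sq] using sq_sum_le_card_mul_sum_sq (s := univ) (f := fun i => |w i|)

end Matrix

lemma Real.abs_sqrt_sub_sqrt_le {a b : ℝ} (ha : 0 ≤ a) (hb : 0 ≤ b) :
    |√a - √b| ≤ √|a - b| := by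
  wlog hab : b ≤ a generalizing a b
  · rw [abs_sub_comm, abs_sub_comm a b]; exact this hb ha (le_of_not_ge hab)
  rw [abs_of_nonneg (sub_nonneg.2 (Real.sqrt_le_sqrt hab)), abs_of_nonneg (sub_nonneg.2 hab),
    sub_le_iff_le_add]
  have hb' := Real.sq_sqrt hb
  have hab' := Real.sq_sqrt (sub_nonneg.2 hab)
  refine Real.sqrt_le_iff.2 ⟨by positivity, ?_⟩
  nlinarith [Real.sqrt_nonneg b, Real.sqrt_nonneg (a - b)]

section Kernel

variable {X : Type*}

def kernelMatrix (k : X → X → ℝ) {ι : Type*} (x : ι → X) : Matrix ι ι ℝ :=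
  Matrix.of fun i j => k (x i) (x j)

def kernelVec (k : X → X → ℝ) {ι : Type*} (x : ι → X) (z : X) : ι → ℝ :=
  fun i => k z (x i)

noncomputable def postWeights (k : X → X → ℝ) (σ : ℝ) {ι : Type*} [Fintype ι] [DecidableEq ι]
    (x : ι → X) (z : X) : ι → ℝ :=
  (kernelMatrix k x + σ ^ 2 • 1)⁻¹ *ᵥ kernelVec k x z

lemma postVar_eq (k : X → X → ℝ) (σ : ℝ) {n : ℕ} (x : Fin n → X) (z : X) :
    postVar k σ x z = k z z - kernelVec k x z ⬝ᵥ postWeights k σ x z :=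
  rfl

namespace IsPSDKernel

variable {k : X → X → ℝ} (hk : IsPSDKernel k) {σ : ℝ} (hσ : σ ≠ 0) {n : ℕ} (x : Fin n → X)
  (z : X)
include hk

lemma two_mul_dotProduct_kernelVec_le (w : Fin n → ℝ) :
    2 * (w ⬝ᵥ kernelVec k x z) ≤ k z z + w ⬝ᵥ (kernelMatrix k x *ᵥ w) := by
  have h := (hk.2 (n + 1) (Fin.cons z x)).dotProduct_mulVec_nonneg (Fin.cons 1 (-w))
  simp only [star_trivial, dotProduct, mulVec, of_apply, Fin.sum_univ_succ, Fin.cons_zero,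
    Fin.cons_succ, hk.1 (x _) z] at h
  simp only [dotProduct, mulVec, kernelMatrix, kernelVec, of_apply]
  simp only [Pi.neg_apply, neg_mul, mul_neg, neg_neg, one_mul, mul_one, sum_neg_distrib,
    mul_add, sum_add_distrib] at h
  simp only [mul_comm (k z _)] at h
  linarith

include hσ

lemma regularizedKernelMatrix_posDef : (kernelMatrix k x + σ ^ 2 • 1).PosDef :=
  PosDef.posSemidef_add (hk.2 n x) (PosDef.one.smul (by positivity))

lemma regularizedKernelMatrix_mulVec_postWeights :
    (kernelMatrix k x + σ ^ 2 • 1) *ᵥ postWeights k σ x z = kernelVec k x z := by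
  rw [postWeights, mulVec_mulVec,
    mul_nonsing_inv _ (hk.regularizedKernelMatrix_posDef hσ x).det_pos.ne'.isUnit, one_mulVec]

lemma kernelMatrix_mulVec_postWeights :
    kernelMatrix k x *ᵥ postWeights k σ x z = kernelVec k x z - σ ^ 2 • postWeights k σ x z := by
  have h := hk.regularizedKernelMatrix_mulVec_postWeights hσ x z
  rw [add_mulVec, smul_mulVec, one_mulVec] at h
  exact eq_sub_of_add_eq h

lemma sq_mul_dotProduct_self_le_postVar :
    σ ^ 2 * (postWeights k σ x z ⬝ᵥ postWeights k σ x z) ≤ postVar k σ x z := by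
  have h := hk.two_mul_dotProduct_kernelVec_le x z (postWeights k σ x z)
  rw [kernelMatrix_mulVec_postWeights hk hσ, dotProduct_sub, dotProduct_smul, smul_eq_mul,
    dotProduct_comm] at h
  rw [postVar_eq]
  linarith

lemma postVar_nonneg : 0 ≤ postVar k σ x z := by
  have hw := dotProduct_self_star_nonneg (postWeights k σ x z)
  rw [star_trivial] at hw
  exact (mul_nonneg (sq_nonneg σ) hw).trans (hk.sq_mul_dotProduct_self_le_postVar hσ x z)

lemma kernelVec_dotProduct_postWeights_nonneg :
    0 ≤ kernelVec k x z ⬝ᵥ postWeights k σ x z := by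
  simpa [postWeights] using
    (hk.regularizedKernelMatrix_posDef hσ x).posSemidef.inv.dotProduct_mulVec_nonneg
      (kernelVec k x z)

lemma sq_sum_abs_postWeights_le {B : ℝ} (hB : k z z ≤ B) :
    (∑ i, |postWeights k σ x z i|) ^ 2 ≤ n * (B / σ ^ 2) := by
  have hw : postWeights k σ x z ⬝ᵥ postWeights k σ x z ≤ B / σ ^ 2 := by
    rw [le_div_iff₀' (by positivity)]
    linarith [hk.sq_mul_dotProduct_self_le_postVar hσ x z, postVar_eq k σ x z,
      hk.kernelVec_dotProduct_postWeights_nonneg hσ x z]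
  calc (∑ i, |postWeights k σ x z i|) ^ 2
      ≤ n * (postWeights k σ x z ⬝ᵥ postWeights k σ x z) := by
        simpa using sq_sum_abs_le_card_mul_dotProduct_self (postWeights k σ x z)
    _ ≤ n * (B / σ ^ 2) := by gcongr

end IsPSDKernel

lemma abs_postVar_sub_postVar_le {k k' : X → X → ℝ} (hk : IsPSDKernel k) (hk' : IsPSDKernel k')
    {σ : ℝ} (hσ : σ ≠ 0) {η : ℝ} (hdiff : ∀ x x', |k x x' - k' x x'| ≤ η) {n : ℕ}
    (x : Fin n → X) (z : X) :
    |postVar k σ x z - postVar k' σ x z| ≤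
      η * (1 + ∑ i, |postWeights k σ x z i| + ∑ i, |postWeights k' σ x z i| +
        (∑ i, |postWeights k' σ x z i|) * ∑ i, |postWeights k σ x z i|) := by
  set w := postWeights k σ x z
  set w' := postWeights k' σ x z
  set dv := kernelVec k x z - kernelVec k' x z
  set dK := (kernelMatrix k' x + σ ^ 2 • 1) - (kernelMatrix k x + σ ^ 2 • 1)
  have hdv : ∀ i, |dv i| ≤ η := fun i => hdiff z (x i)
  have hdK : ∀ i j, |dK i j| ≤ η := fun i j => by
    simpa [dK, kernelMatrix, abs_sub_comm] using hdiff (x i) (x j)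
  have hsplit : postVar k σ x z - postVar k' σ x z =
      (k z z - k' z z) - (dv ⬝ᵥ w + w' ⬝ᵥ (dK *ᵥ w) + w' ⬝ᵥ dv) := by
    rw [postVar_eq, postVar_eq, ← dotProduct_sub_dotProduct_eq_of_mulVec_eq
      (isHermitian_iff_isSymm.1 (hk'.regularizedKernelMatrix_posDef hσ x).isHermitian)
      (hk.regularizedKernelMatrix_mulVec_postWeights hσ x z)
      (hk'.regularizedKernelMatrix_mulVec_postWeights hσ x z)]
    ring
  calc |postVar k σ x z - postVar k' σ x z|
      ≤ |k z z - k' z z| + (|dv ⬝ᵥ w| + |w' ⬝ᵥ (dK *ᵥ w)| + |w' ⬝ᵥ dv|) := by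
        rw [hsplit]
        exact (abs_sub _ _).trans (add_le_add_right (abs_add_three _ _ _) _)
    _ ≤ η + (η * ∑ i, |w i| + η * (∑ i, |w' i|) * ∑ i, |w i| + η * ∑ i, |w' i|) := by
        gcongr
        · exact hdiff z z
        · exact abs_dotProduct_le_of_abs_le hdv w
        · exact abs_dotProduct_mulVec_le_of_abs_le hdK w' w
        · rw [dotProduct_comm]
          exact abs_dotProduct_le_of_abs_le hdv w'
    _ = _ := by ring

end Kernel

lemma add_add_mul_le_four_mul_sq {n : ℕ} {c S T : ℝ} (hc : 1 ≤ c) (hS : 0 ≤ S) (hT : 0 ≤ T)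
    (hS2 : S ^ 2 ≤ n * c) (hT2 : T ^ 2 ≤ n * (2 * c)) : S + T + T * S ≤ 4 * (n * c) ^ 2 := by
  rcases Nat.eq_zero_or_pos n with rfl | hn
  · obtain rfl : S = 0 := by simp only [CharP.cast_eq_zero, zero_mul] at hS2; nlinarith
    obtain rfl : T = 0 := by simp only [CharP.cast_eq_zero, zero_mul] at hT2; nlinarith
    norm_num
  set b := (n : ℝ) * c
  have hb : 1 ≤ b := one_le_mul_of_one_le_of_one_le (by exact_mod_cast hn) hc
  have hSb : S ≤ b := by nlinarith
  have hTb : T ≤ 3 / 2 * b := by nlinarith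
  -- `(T S)² ≤ 2 b² ≤ (3 b / 2)²`, so the sum is at most `4 b ≤ 4 b²`.
  have hTSb : T * S ≤ 3 / 2 * b := by nlinarith [mul_nonneg hT hS]
  nlinarith

theorem posterior_stddev_perturbation_general
    {X : Type*} (k ktil : X → X → ℝ)
    (hk : IsPSDKernel k) (hktil : IsPSDKernel ktil)
    (K₀ η : ℝ) (hη0 : 0 ≤ η) (hη1 : η ≤ 1)
    (hbound : ∀ x x', |k x x'| ≤ K₀)
    (hdiff : ∀ x x', |k x x' - ktil x x'| ≤ η)
    (σ : ℝ) (hσ : 0 < σ) (hσ1 : σ ≤ 1)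
    (n : ℕ) (x : Fin n → X) (z : X) :
    0 ≤ postVar k σ x z ∧ 0 ≤ postVar ktil σ x z ∧
      |Real.sqrt (postVar k σ x z) - Real.sqrt (postVar ktil σ x z)| ≤
        Real.sqrt (η * (1 + 4 * max 1 K₀ ^ 2 * (n : ℝ) ^ 2 / σ ^ 4)) := by
  have hv := hk.postVar_nonneg hσ.ne' x z
  have hv' := hktil.postVar_nonneg hσ.ne' x z
  refine ⟨hv, hv', (Real.abs_sqrt_sub_sqrt_le hv hv').trans (Real.sqrt_le_sqrt ?_)⟩
  set K := max 1 K₀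
  have hK1 : 1 ≤ K := le_max_left _ _
  have hkzz : k z z ≤ K := (le_abs_self _).trans ((hbound z z).trans (le_max_right _ _))
  have hkzz' : ktil z z ≤ 2 * K := by linarith [(abs_le.1 (hdiff z z)).1]
  have hc : 1 ≤ K / σ ^ 2 := by
    rw [one_le_div₀ (by positivity)]
    nlinarith
  calc |postVar k σ x z - postVar ktil σ x z|
      ≤ η * (1 + ∑ i, |postWeights k σ x z i| + ∑ i, |postWeights ktil σ x z i| +
          (∑ i, |postWeights ktil σ x z i|) * ∑ i, |postWeights k σ x z i|) :=
        abs_postVar_sub_postVar_le hk hktil hσ.ne' hdiff x z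
    _ ≤ η * (1 + 4 * (n * (K / σ ^ 2)) ^ 2) := by
        rw [add_assoc, add_assoc, ← add_assoc (∑ i, _)]
        gcongr
        refine add_add_mul_le_four_mul_sq hc (by positivity) (by positivity)
          (hk.sq_sum_abs_postWeights_le hσ.ne' x z hkzz) ?_
        simpa only [mul_div_assoc] using hktil.sq_sum_abs_postWeights_le hσ.ne' x z hkzz'
    _ = η * (1 + 4 * K ^ 2 * (n : ℝ) ^ 2 / σ ^ 4) := by ring

/-- Lemma 9 of the paper: the GP posterior standard deviations computed with the exact
NTK `k` and with the empirical NTK `k̃` differ by at most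
`√(η·(1 + 4K̂₀²n²/σ⁴))` when the kernels differ entrywise by at most `η`. -/
theorem posterior_stddev_perturbation
    {X : Type*} (k ktil : X → X → ℝ)
    (hk : IsPSDKernel k) (hktil : IsPSDKernel ktil)
    (K₀ η : ℝ) (hK₀ : 0 < K₀) (hη0 : 0 ≤ η) (hη1 : η ≤ 1)
    (hbound : ∀ x x', |k x x'| ≤ K₀)
    (hdiff : ∀ x x', |k x x' - ktil x x'| ≤ η)
    (σ : ℝ) (hσ : 0 < σ) (hσ1 : σ ≤ 1)
    (n : ℕ) (x : Fin n → X) (z : X) :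
    0 ≤ postVar k σ x z ∧ 0 ≤ postVar ktil σ x z ∧
      |Real.sqrt (postVar k σ x z) - Real.sqrt (postVar ktil σ x z)| ≤
        Real.sqrt (η * (1 + 4 * max 1 K₀ ^ 2 * (n : ℝ) ^ 2 / σ ^ 4)) :=
  posterior_stddev_perturbation_general k ktil hk hktil K₀ η hη0 hη1 hbound hdiff σ hσ hσ1 n x z
end

section
/- Let n be a positive integer, σ ∈ (0, 1], η ∈ [0, 1], K₀ > 0, M ≥ 0, and set K̂₀ = max(1, K₀). Let K, K̃ ∈ ℝ^{n×n} be symmetric positive semidefinite matrices with |K_{ij} − K̃_{ij}| ≤ η for all i, j; let k, k̃ ∈ ℝⁿ with |k_i| ≤ K₀ and |k_i − k̃_i| ≤ η for all i; and let y ∈ ℝⁿ with ‖y‖₂ ≤ √n·M. Then |kᵀ(K + σ²I)⁻¹y − k̃ᵀ(K̃ + σ²I)⁻¹y| ≤ 2·K̂₀·n²·η·M/σ⁴. (The deterministic core of Lemma 10: the difference of the GP posterior means computed with the exact and empirical NTK is controlled by the kernel approximation error η = (L+1)ε and the norm of the observation vector.) -/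
/-!
Write `A = K + σ²I`, `Ã = K̃ + σ²I` and `v = Ã⁻¹y`. The resolvent identity
`A⁻¹ - Ã⁻¹ = A⁻¹(Ã - A)Ã⁻¹` splits the difference of the posterior means into
`(k - k̃)ᵀv + kᵀA⁻¹(K̃ - K)v`. Positive semidefiniteness of `K` makes `A` coercive,
`σ²‖x‖ ≤ ‖Ax‖`, so `‖A⁻¹x‖ ≤ ‖x‖/σ²` and likewise for `Ã`; an entrywise bound `η` on a
matrix bounds its action by `nη`. Cauchy–Schwarz then gives
`|μ - μ̃| ≤ nηM/σ² + K̂₀n²ηM/σ⁴`, and `σ ≤ 1` makes both terms at most `K̂₀n²ηM/σ⁴`.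
-/

open Matrix

/-- The Euclidean norm of a vector in `ℝⁿ`. -/
noncomputable def euclNorm {n : ℕ} (u : Fin n → ℝ) : ℝ :=
  Real.sqrt (∑ i, u i ^ 2)

namespace Matrix

theorem dotProduct_inv_mulVec_sub_dotProduct_inv_mulVec {ι R : Type*} [Fintype ι]
    [DecidableEq ι] [CommRing R] {A B : Matrix ι ι R} (hA : IsUnit A) (hB : IsUnit B)
    (k k' y : ι → R) :
    k ⬝ᵥ (A⁻¹ *ᵥ y) - k' ⬝ᵥ (B⁻¹ *ᵥ y) =
      (k - k') ⬝ᵥ (B⁻¹ *ᵥ y) + k ⬝ᵥ (A⁻¹ *ᵥ ((B - A) *ᵥ (B⁻¹ *ᵥ y))) := by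
  have hres : A⁻¹ *ᵥ ((B - A) *ᵥ (B⁻¹ *ᵥ y)) = A⁻¹ *ᵥ y - B⁻¹ *ᵥ y := by
    rw [mulVec_mulVec, mulVec_mulVec, ← inv_sub_inv (iff_of_true hA hB), sub_mulVec]
  rw [hres, dotProduct_sub, sub_dotProduct]
  ring

theorem PosSemidef.isUnit_add_smul_one {ι : Type*} [Fintype ι] [DecidableEq ι]
    {K : Matrix ι ι ℝ} (hK : K.PosSemidef) {c : ℝ} (hc : 0 < c) : IsUnit (K + c • 1) :=
  (PosDef.posSemidef_add hK (PosDef.one.smul hc)).isUnit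

end Matrix

section euclNorm

variable {n : ℕ}

theorem euclNorm_nonneg (u : Fin n → ℝ) : 0 ≤ euclNorm u := Real.sqrt_nonneg _

theorem euclNorm_sq (u : Fin n → ℝ) : euclNorm u ^ 2 = u ⬝ᵥ u := by
  rw [euclNorm, Real.sq_sqrt (Finset.sum_nonneg fun i _ => sq_nonneg (u i))]
  simp only [dotProduct, sq]

theorem abs_dotProduct_le_euclNorm_mul (u v : Fin n → ℝ) :
    |u ⬝ᵥ v| ≤ euclNorm u * euclNorm v := by
  rw [euclNorm, euclNorm, ← Real.sqrt_mul (Finset.sum_nonneg fun i _ => sq_nonneg (u i))]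
  exact Real.abs_le_sqrt (Finset.sum_mul_sq_le_sq_mul_sq Finset.univ u v)

theorem euclNorm_le_of_abs_le {u : Fin n → ℝ} {c : ℝ} (hc : 0 ≤ c) (h : ∀ i, |u i| ≤ c) :
    euclNorm u ≤ Real.sqrt n * c := by
  calc euclNorm u ≤ Real.sqrt (∑ _i : Fin n, c ^ 2) :=
        Real.sqrt_le_sqrt (Finset.sum_le_sum fun i _ => sq_le_sq.2 ((h i).trans (le_abs_self c)))
    _ = Real.sqrt n * c := by simp [Real.sqrt_mul, hc]

theorem euclNorm_mulVec_le_of_abs_le {B : Matrix (Fin n) (Fin n) ℝ} {c : ℝ} (hc : 0 ≤ c)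
    (hB : ∀ i j, |B i j| ≤ c) (x : Fin n → ℝ) :
    euclNorm (B *ᵥ x) ≤ n * c * euclNorm x := by
  have hrow : ∀ i, |(B *ᵥ x) i| ≤ Real.sqrt n * c * euclNorm x := fun i =>
    (abs_dotProduct_le_euclNorm_mul (B i) x).trans <|
      mul_le_mul_of_nonneg_right (euclNorm_le_of_abs_le hc (hB i)) (euclNorm_nonneg x)
  calc euclNorm (B *ᵥ x) ≤ Real.sqrt n * (Real.sqrt n * c * euclNorm x) :=
        euclNorm_le_of_abs_le (by have := euclNorm_nonneg x; positivity) hrow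
    _ = n * c * euclNorm x := by
        rw [← mul_assoc, ← mul_assoc, Real.mul_self_sqrt (Nat.cast_nonneg n)]

variable {K : Matrix (Fin n) (Fin n) ℝ}

theorem mul_euclNorm_le_euclNorm_add_smul_one_mulVec (hK : K.PosSemidef) (c : ℝ)
    (x : Fin n → ℝ) :
    c * euclNorm x ≤ euclNorm ((K + c • 1) *ᵥ x) := by
  have hquad : c * euclNorm x * euclNorm x ≤ euclNorm ((K + c • 1) *ᵥ x) * euclNorm x :=
    calc c * euclNorm x * euclNorm x = c * (x ⬝ᵥ x) := by rw [mul_assoc, ← sq, euclNorm_sq]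
      _ ≤ x ⬝ᵥ (K *ᵥ x) + c * (x ⬝ᵥ x) := by
          have := hK.dotProduct_mulVec_nonneg x
          simp only [star_trivial] at this
          linarith
      _ = x ⬝ᵥ ((K + c • 1) *ᵥ x) := by
          rw [add_mulVec, smul_mulVec, one_mulVec, dotProduct_add, dotProduct_smul, smul_eq_mul]
      _ ≤ euclNorm ((K + c • 1) *ᵥ x) * euclNorm x := by
          rw [mul_comm]
          exact (le_abs_self _).trans (abs_dotProduct_le_euclNorm_mul _ _)
  rcases (euclNorm_nonneg x).eq_or_lt with hx | hx
  · rw [← hx, mul_zero]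
    exact euclNorm_nonneg _
  · exact le_of_mul_le_mul_right hquad hx

theorem euclNorm_add_smul_one_inv_mulVec_le (hK : K.PosSemidef) {c : ℝ} (hc : 0 < c)
    (x : Fin n → ℝ) :
    euclNorm ((K + c • 1)⁻¹ *ᵥ x) ≤ euclNorm x / c := by
  have hdet := (isUnit_iff_isUnit_det _).1 (hK.isUnit_add_smul_one hc)
  have := mul_euclNorm_le_euclNorm_add_smul_one_mulVec hK c ((K + c • 1)⁻¹ *ᵥ x)
  rwa [mulVec_mulVec, mul_nonsing_inv _ hdet, one_mulVec, ← le_div_iff₀' hc] at this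

theorem abs_dotProduct_add_smul_one_inv_mulVec_sub_le {K' : Matrix (Fin n) (Fin n) ℝ}
    (hK : K.PosSemidef) (hK' : K'.PosSemidef) {c η C : ℝ} (hc : 0 < c) (hη : 0 ≤ η)
    (hC : 0 ≤ C) (hKK' : ∀ i j, |K i j - K' i j| ≤ η) {k k' : Fin n → ℝ}
    (hk : ∀ i, |k i| ≤ C) (hkk' : ∀ i, |k i - k' i| ≤ η) (y : Fin n → ℝ) :
    |k ⬝ᵥ ((K + c • 1)⁻¹ *ᵥ y) - k' ⬝ᵥ ((K' + c • 1)⁻¹ *ᵥ y)| ≤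
      Real.sqrt n * η * (euclNorm y / c) +
        Real.sqrt n * C * (n * η * (euclNorm y / c) / c) := by
  set v := (K' + c • 1)⁻¹ *ᵥ y
  set u := (K + c • 1)⁻¹ *ᵥ ((K' + c • 1 - (K + c • 1)) *ᵥ v)
  rw [dotProduct_inv_mulVec_sub_dotProduct_inv_mulVec (hK.isUnit_add_smul_one hc)
    (hK'.isUnit_add_smul_one hc)]
  have hv : euclNorm v ≤ euclNorm y / c := euclNorm_add_smul_one_inv_mulVec_le hK' hc y
  have hu : euclNorm u ≤ n * η * (euclNorm y / c) / c := by
    refine (euclNorm_add_smul_one_inv_mulVec_le hK hc _).trans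
      (div_le_div_of_nonneg_right ?_ hc.le)
    refine (euclNorm_mulVec_le_of_abs_le hη (fun i j => ?_) v).trans (by gcongr)
    rw [add_sub_add_right_eq_sub, Matrix.sub_apply, abs_sub_comm]
    exact hKK' i j
  have := euclNorm_nonneg v
  have := euclNorm_nonneg u
  calc |(k - k') ⬝ᵥ v + k ⬝ᵥ u|
      ≤ euclNorm (k - k') * euclNorm v + euclNorm k * euclNorm u :=
        (abs_add_le _ _).trans (add_le_add (abs_dotProduct_le_euclNorm_mul _ _)
          (abs_dotProduct_le_euclNorm_mul _ _))
    _ ≤ _ := by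
        gcongr
        exacts [euclNorm_le_of_abs_le hη hkk', euclNorm_le_of_abs_le hC hk]

end euclNorm

theorem posterior_mean_perturbation_general
    (n : ℕ) (σ : ℝ) (hσ : 0 < σ) (hσ1 : σ ≤ 1)
    (η : ℝ) (hη0 : 0 ≤ η) (K₀ : ℝ) (M : ℝ) (hM : 0 ≤ M)
    (K Ktil : Matrix (Fin n) (Fin n) ℝ) (hK : K.PosSemidef) (hKtil : Ktil.PosSemidef)
    (hKdiff : ∀ i j, |K i j - Ktil i j| ≤ η)
    (k ktil : Fin n → ℝ) (hk : ∀ i, |k i| ≤ K₀) (hkdiff : ∀ i, |k i - ktil i| ≤ η)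
    (y : Fin n → ℝ) (hy : euclNorm y ≤ Real.sqrt n * M) :
    |k ⬝ᵥ ((K + σ ^ 2 • (1 : Matrix (Fin n) (Fin n) ℝ))⁻¹ *ᵥ y) -
        ktil ⬝ᵥ ((Ktil + σ ^ 2 • (1 : Matrix (Fin n) (Fin n) ℝ))⁻¹ *ᵥ y)| ≤
      2 * max 1 K₀ * (n : ℝ) ^ 2 * η * M / σ ^ 4 := by
  have hσ2 : 0 < σ ^ 2 := by positivity
  have hK₀ : 0 ≤ max 1 K₀ := zero_le_one.trans (le_max_left _ _)
  have hnM : n * η * M / σ ^ 2 ≤ max 1 K₀ * n ^ 2 * η * M / σ ^ 4 := by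
    refine div_le_div₀ (by positivity) ?_ (by positivity)
      (pow_le_pow_of_le_one hσ.le hσ1 (by norm_num))
    rw [← one_mul (n * η * M), ← mul_assoc, ← mul_assoc]
    gcongr
    · exact le_max_left _ _
    · exact_mod_cast Nat.le_self_pow two_ne_zero n
  calc _ ≤ Real.sqrt n * η * (euclNorm y / σ ^ 2) +
          Real.sqrt n * max 1 K₀ * (n * η * (euclNorm y / σ ^ 2) / σ ^ 2) :=
        abs_dotProduct_add_smul_one_inv_mulVec_sub_le hK hKtil hσ2 hη0 hK₀ hKdiff
          (fun i => (hk i).trans (le_max_right _ _)) hkdiff y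
    _ ≤ Real.sqrt n * η * (Real.sqrt n * M / σ ^ 2) +
          Real.sqrt n * max 1 K₀ * (n * η * (Real.sqrt n * M / σ ^ 2) / σ ^ 2) := by
        gcongr
    _ = n * η * M / σ ^ 2 + max 1 K₀ * n ^ 2 * η * M / σ ^ 4 := by
        field_simp
        rw [Real.sq_sqrt (Nat.cast_nonneg n)]
        ring
    _ ≤ max 1 K₀ * n ^ 2 * η * M / σ ^ 4 + max 1 K₀ * n ^ 2 * η * M / σ ^ 4 := by gcongr
    _ = 2 * max 1 K₀ * n ^ 2 * η * M / σ ^ 4 := by ring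

/-- Deterministic core of Lemma 10: the difference of the GP posterior means
`kᵀ(K + σ²I)⁻¹y` computed with the exact and empirical NTK is controlled by the
entrywise kernel approximation error `η` and the norm of the observation vector. -/
theorem posterior_mean_perturbation
    (n : ℕ) (hn : 0 < n) (σ : ℝ) (hσ : 0 < σ) (hσ1 : σ ≤ 1)
    (η : ℝ) (hη0 : 0 ≤ η) (hη1 : η ≤ 1) (K₀ : ℝ) (hK₀ : 0 < K₀) (M : ℝ) (hM : 0 ≤ M)
    (K Ktil : Matrix (Fin n) (Fin n) ℝ) (hK : K.PosSemidef) (hKtil : Ktil.PosSemidef)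
    (hKdiff : ∀ i j, |K i j - Ktil i j| ≤ η)
    (k ktil : Fin n → ℝ) (hk : ∀ i, |k i| ≤ K₀) (hkdiff : ∀ i, |k i - ktil i| ≤ η)
    (y : Fin n → ℝ) (hy : euclNorm y ≤ Real.sqrt n * M) :
    |k ⬝ᵥ ((K + σ ^ 2 • (1 : Matrix (Fin n) (Fin n) ℝ))⁻¹ *ᵥ y) -
        ktil ⬝ᵥ ((Ktil + σ ^ 2 • (1 : Matrix (Fin n) (Fin n) ℝ))⁻¹ *ᵥ y)| ≤
      2 * max 1 K₀ * (n : ℝ) ^ 2 * η * M / σ ^ 4 :=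
  posterior_mean_perturbation_general n σ hσ hσ1 η hη0 K₀ M hM K Ktil hK hKtil hKdiff k ktil hk
    hkdiff y hy
end
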